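/- arXiv:2110.00741 — 3 statements merged into one kernel-verified Lean document; each statement's English description precedes it below -/
import Mathlib

section
/- Define the graph G_{x,y} on vertex set A₁ ∪ A₂ ∪ B₁ ∪ B₂, where each part is a copy of Fin n, with edges: all pairs within A₁; all pairs within B₂; the matching edges (a₁ⁱ, b₁ⁱ) and (a₂ⁱ, b₂ⁱ) for all i; edges (a₁ⁱ, a₂ʲ) iff x_{ij} = 1; and edges (b₁ⁱ, b₂ʲ) iff y_{ij} = 1, where x, y : Fin n × Fin n → Bool. Then G_{x,y} contains an induced 4-cycle if and only if there exist i, j with x_{ij} = y_{ij} = 1. -/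
open SimpleGraph

/-- Vertices of the lower-bound graph: `A₁ = inl (inl i)`, `A₂ = inl (inr i)`,
`B₁ = inr (inl i)`, `B₂ = inr (inr i)`. -/
abbrev LBVertex (n : ℕ) := (Fin n ⊕ Fin n) ⊕ (Fin n ⊕ Fin n)

/-- The lower-bound graph `G_{x,y}`: `A₁` and `B₂` are cliques, `A₂` and `B₁` are
independent sets, with matching edges `(a₁ⁱ, b₁ⁱ)` and `(a₂ⁱ, b₂ⁱ)`, input edges
`(a₁ⁱ, a₂ʲ)` iff `x i j` and `(b₁ⁱ, b₂ʲ)` iff `y i j`. -/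
def Gxy (n : ℕ) (x y : Fin n → Fin n → Bool) : SimpleGraph (LBVertex n) :=
  SimpleGraph.fromRel (fun u v =>
    match u, v with
    | Sum.inl (Sum.inl _), Sum.inl (Sum.inl _) => True            -- A₁ is a clique
    | Sum.inr (Sum.inr _), Sum.inr (Sum.inr _) => True            -- B₂ is a clique
    | Sum.inl (Sum.inl i), Sum.inr (Sum.inl j) => i = j           -- matching A₁–B₁
    | Sum.inl (Sum.inr i), Sum.inr (Sum.inr j) => i = j           -- matching A₂–B₂
    | Sum.inl (Sum.inl i), Sum.inl (Sum.inr j) => x i j = true    -- input edges in A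
    | Sum.inr (Sum.inl i), Sum.inr (Sum.inr j) => y i j = true    -- input edges in B
    | _, _ => False)

set_option maxHeartbeats 2000000 in
/-- Auxiliary: from the four vertices of an induced 4-cycle in `Gxy`, extract `i, j`
with `x i j = y i j = true`, by case analysis on which parts the vertices lie in. -/
lemma key_aux_stmt_5 (n : ℕ) (x y : Fin n → Fin n → Bool) (v0 v1 v2 v3 : LBVertex n)
    (h01 : (Gxy n x y).Adj v0 v1) (h12 : (Gxy n x y).Adj v1 v2)
    (h23 : (Gxy n x y).Adj v2 v3) (h30 : (Gxy n x y).Adj v3 v0)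
    (h02 : ¬ (Gxy n x y).Adj v0 v2) (h13 : ¬ (Gxy n x y).Adj v1 v3)
    (ne02 : v0 ≠ v2) (ne13 : v1 ≠ v3) :
    ∃ i j : Fin n, x i j = true ∧ y i j = true := by
  rcases v0 with (a0|a0)|(a0|a0) <;> rcases v1 with (a1|a1)|(a1|a1) <;>
    rcases v2 with (a2|a2)|(a2|a2) <;> rcases v3 with (a3|a3)|(a3|a3) <;>
    simp only [Gxy, fromRel_adj, ne_eq, Sum.inl.injEq, Sum.inr.injEq, not_and, not_or, not_not,
      not_true, not_false_iff, true_and, and_true, or_false, false_or, or_true, true_or,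
      reduceCtorEq, not_false_eq_true, forall_true_left, and_self, iff_true, iff_false,
      imp_false] at h01 h12 h23 h30 h02 h13 ne02 ne13 <;>
    first
      | tauto
      | (subst_vars
         first
           | exact ⟨_, _, by assumption, by assumption⟩
           | simp_all)

/-- `G_{x,y}` contains an induced 4-cycle iff `x i j = y i j = 1` for some `i, j`. -/
theorem stmt_5 (n : ℕ) (x y : Fin n → Fin n → Bool) :
    (∃ S : Set (LBVertex n), Nonempty ((Gxy n x y).induce S ≃g cycleGraph 4)) ↔
      ∃ i j : Fin n, x i j = true ∧ y i j = true := by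
  constructor
  · rintro ⟨S, ⟨f⟩⟩
    set e := f.symm with he
    have hadj : ∀ a b : Fin 4, (Gxy n x y).Adj (e a).1 (e b).1 ↔ (cycleGraph 4).Adj a b := by
      intro a b
      rw [← e.map_adj_iff]
      rfl
    have hne : ∀ a b : Fin 4, a ≠ b → ((e a : LBVertex n) : LBVertex n) ≠ (e b).1 :=
      fun a b hab h => hab (e.injective (Subtype.ext h))
    exact key_aux_stmt_5 n x y (e 0).1 (e 1).1 (e 2).1 (e 3).1
      ((hadj 0 1).2 (by decide)) ((hadj 1 2).2 (by decide))
      ((hadj 2 3).2 (by decide)) ((hadj 3 0).2 (by decide))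
      (fun h => by have := (hadj 0 2).1 h; revert this; decide)
      (fun h => by have := (hadj 1 3).1 h; revert this; decide)
      (hne 0 2 (by decide)) (hne 1 3 (by decide))
  · rintro ⟨i, j, hx, hy⟩
    classical
    let g : Fin 4 → LBVertex n := fun k =>
      match k with
      | 0 => Sum.inl (Sum.inl i)
      | 1 => Sum.inl (Sum.inr j)
      | 2 => Sum.inr (Sum.inr j)
      | 3 => Sum.inr (Sum.inl i)
    have hg : Function.Injective g := by
      intro a b hab
      fin_cases a <;> fin_cases b <;> simp_all [g]
    refine ⟨Set.range g, ⟨(RelIso.mk (Equiv.ofInjective g hg) ?_).symm⟩⟩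
    intro a b
    show (Gxy n x y).Adj (g a) (g b) ↔ _
    fin_cases a <;> fin_cases b <;>
      simp_all [g, Gxy, fromRel_adj, cycleGraph, SimpleGraph.circulantGraph, Fin.ext_iff] <;>
      decide
end

section
/- In the graph G_{x,y} of the 4-cycle lower bound construction, if a set of four vertices induces a 4-cycle, then it contains exactly one vertex from each of the four parts A₁, A₂, B₁, B₂. -/
open SimpleGraph

set_option maxHeartbeats 1000000
set_option linter.unreachableTactic false
set_option linter.unusedTactic false
/-- If a vertex set of `G_{x,y}` induces a 4-cycle, then it consists of exactly one
vertex from each of the four parts `A₁`, `A₂`, `B₁`, `B₂`. -/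
theorem stmt_6 (n : ℕ) (x y : Fin n → Fin n → Bool) (S : Set (LBVertex n))
    (h : Nonempty ((Gxy n x y).induce S ≃g cycleGraph 4)) :
    ∃ i j k l : Fin n,
      S = {Sum.inl (Sum.inl i), Sum.inl (Sum.inr j),
           Sum.inr (Sum.inl k), Sum.inr (Sum.inr l)} := by
  obtain ⟨e⟩ := h
  let f : Fin 4 → LBVertex n := fun i => (e.symm i : LBVertex n)
  have hmem : ∀ i, f i ∈ S := fun i => (e.symm i).2
  have hadj : ∀ i j : Fin 4, (Gxy n x y).Adj (f i) (f j) ↔ (cycleGraph 4).Adj i j :=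
    fun i j => e.symm.map_adj_iff
  have hne : ∀ i j : Fin 4, i ≠ j → f i ≠ f j := by
    intro i j hij hf
    exact hij (e.symm.toEquiv.injective (Subtype.ext hf))
  have hS : S = {f 0, f 1, f 2, f 3} := by
    ext z
    constructor
    · intro hz
      obtain ⟨k, hk⟩ : ∃ k, f k = z := ⟨e ⟨z, hz⟩, congrArg Subtype.val (e.symm_apply_apply ⟨z, hz⟩)⟩
      fin_cases k <;> simp_all
    · rintro (rfl | rfl | rfl | rfl) <;> exact hmem _
  have h01 : (Gxy n x y).Adj (f 0) (f 1) := (hadj 0 1).2 (by decide)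
  have h12 : (Gxy n x y).Adj (f 1) (f 2) := (hadj 1 2).2 (by decide)
  have h23 : (Gxy n x y).Adj (f 2) (f 3) := (hadj 2 3).2 (by decide)
  have h30 : (Gxy n x y).Adj (f 3) (f 0) := (hadj 3 0).2 (by decide)
  have n02 : ¬ (Gxy n x y).Adj (f 0) (f 2) := fun a => (by decide : ¬ (cycleGraph 4).Adj 0 2) ((hadj 0 2).1 a)
  have n13 : ¬ (Gxy n x y).Adj (f 1) (f 3) := fun a => (by decide : ¬ (cycleGraph 4).Adj 1 3) ((hadj 1 3).1 a)
  have d02 : f 0 ≠ f 2 := hne 0 2 (by decide)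
  have d13 : f 1 ≠ f 3 := hne 1 3 (by decide)
  rw [hS]
  clear hS hadj hne hmem
  generalize f 0 = w0 at h01 h30 n02 d02 ⊢
  generalize f 1 = w1 at h01 h12 n13 d13 ⊢
  generalize f 2 = w2 at h12 h23 n02 d02 ⊢
  generalize f 3 = w3 at h23 h30 n13 d13 ⊢
  simp only [Gxy, fromRel_adj] at h01 h12 h23 h30 n02 n13
  rcases w0 with (a0 | a0) | (a0 | a0) <;>
    rcases w1 with (a1 | a1) | (a1 | a1) <;>
    rcases w2 with (a2 | a2) | (a2 | a2) <;>
    rcases w3 with (a3 | a3) | (a3 | a3) <;>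
    simp_all <;> subst_vars <;>
    first
      | (refine ⟨a0, a1, a0, a1, ?_⟩; ext z; simp [Set.mem_insert_iff]; tauto)
      | (refine ⟨a0, a2, a0, a2, ?_⟩; ext z; simp [Set.mem_insert_iff]; tauto)
      | (refine ⟨a0, a3, a0, a3, ?_⟩; ext z; simp [Set.mem_insert_iff]; tauto)
      | (refine ⟨a1, a0, a1, a0, ?_⟩; ext z; simp [Set.mem_insert_iff]; tauto)
      | (refine ⟨a1, a2, a1, a2, ?_⟩; ext z; simp [Set.mem_insert_iff]; tauto)
      | (refine ⟨a1, a3, a1, a3, ?_⟩; ext z; simp [Set.mem_insert_iff]; tauto)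
      | (refine ⟨a2, a0, a2, a0, ?_⟩; ext z; simp [Set.mem_insert_iff]; tauto)
      | (refine ⟨a2, a1, a2, a1, ?_⟩; ext z; simp [Set.mem_insert_iff]; tauto)
      | (refine ⟨a2, a3, a2, a3, ?_⟩; ext z; simp [Set.mem_insert_iff]; tauto)
      | (refine ⟨a3, a0, a3, a0, ?_⟩; ext z; simp [Set.mem_insert_iff]; tauto)
      | (refine ⟨a3, a1, a3, a1, ?_⟩; ext z; simp [Set.mem_insert_iff]; tauto)
      | (refine ⟨a3, a2, a3, a2, ?_⟩; ext z; simp [Set.mem_insert_iff]; tauto)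
end

section
/- In the graph G_{x,y} of the 4-cycle lower bound construction, the four vertices (a₁ⁱ, a₂ʲ, b₁ᵏ, b₂ˡ) induce a 4-cycle only if i = k and j = l, and (a₁ⁱ, a₂ʲ, b₁ⁱ, b₂ʲ) induces a 4-cycle if and only if x_{ij} = 1 and y_{ij} = 1. -/
open SimpleGraph

lemma stmt7_c4_fact : ∀ u v w : Fin 4, u ≠ v → u ≠ w → v ≠ w →
    ¬(cycleGraph 4).Adj u v → (cycleGraph 4).Adj u w := by decide

lemma stmt7_key (n : ℕ) (x y : Fin n → Fin n → Bool) (i j k l : Fin n)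
    (h : Nonempty ((Gxy n x y).induce
        ({Sum.inl (Sum.inl i), Sum.inl (Sum.inr j),
          Sum.inr (Sum.inl k), Sum.inr (Sum.inr l)} : Set (LBVertex n)) ≃g cycleGraph 4)) :
    x i j = true ∧ i = k ∧ j = l ∧ y k l = true := by
  obtain ⟨e⟩ := h
  set S : Set (LBVertex n) := {Sum.inl (Sum.inl i), Sum.inl (Sum.inr j),
          Sum.inr (Sum.inl k), Sum.inr (Sum.inr l)} with hS
  let va : S := ⟨Sum.inl (Sum.inl i), by simp [hS]⟩
  let vb : S := ⟨Sum.inl (Sum.inr j), by simp [hS]⟩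
  let vc : S := ⟨Sum.inr (Sum.inl k), by simp [hS]⟩
  let vd : S := ⟨Sum.inr (Sum.inr l), by simp [hS]⟩
  have hne : ∀ u v : S, (u : LBVertex n) ≠ (v : LBVertex n) → e u ≠ e v := by
    intro u v huv h'
    exact huv (congrArg Subtype.val (e.injective h'))
  have had : ¬((Gxy n x y).induce S).Adj va vd := by
    simp [Gxy, comap_adj]
  have hbc : ¬((Gxy n x y).induce S).Adj vb vc := by
    simp [Gxy, comap_adj]
  -- a adjacent to b and c
  have hab : ((Gxy n x y).induce S).Adj va vb := by
    rw [← e.map_adj_iff]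
    exact stmt7_c4_fact _ _ _ (hne va vd (by simp)) (hne va vb (by simp [va, vb])) (hne vd vb (by simp))
      (by rw [e.map_adj_iff]; exact had)
  have hac : ((Gxy n x y).induce S).Adj va vc := by
    rw [← e.map_adj_iff]
    exact stmt7_c4_fact _ _ _ (hne va vd (by simp)) (hne va vc (by simp)) (hne vd vc (by simp [vd, vc]))
      (by rw [e.map_adj_iff]; exact had)
  have hdb : ((Gxy n x y).induce S).Adj vd vb := by
    rw [← e.map_adj_iff]
    exact stmt7_c4_fact _ _ _ (hne vd va (by simp)) (hne vd vb (by simp)) (hne va vb (by simp [va, vb]))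
      (by rw [e.map_adj_iff]; exact fun h' => had h'.symm)
  have hdc : ((Gxy n x y).induce S).Adj vd vc := by
    rw [← e.map_adj_iff]
    exact stmt7_c4_fact _ _ _ (hne vd va (by simp)) (hne vd vc (by simp [vd, vc])) (hne va vc (by simp))
      (by rw [e.map_adj_iff]; exact fun h' => had h'.symm)
  refine ⟨?_, ?_, ?_, ?_⟩
  · simpa [Gxy, comap_adj, va, vb] using hab
  · simpa [Gxy, comap_adj] using hac
  · simpa [Gxy, comap_adj] using hdb
  · simpa [Gxy, comap_adj, vc, vd] using hdc

lemma stmt7_key2 (n : ℕ) (x y : Fin n → Fin n → Bool) (i j : Fin n)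
    (hx : x i j = true) (hy : y i j = true) :
    Nonempty ((Gxy n x y).induce
        ({Sum.inl (Sum.inl i), Sum.inl (Sum.inr j),
          Sum.inr (Sum.inl i), Sum.inr (Sum.inr j)} : Set (LBVertex n)) ≃g cycleGraph 4) := by
  set S : Set (LBVertex n) := {Sum.inl (Sum.inl i), Sum.inl (Sum.inr j),
          Sum.inr (Sum.inl i), Sum.inr (Sum.inr j)} with hS
  let va : S := ⟨Sum.inl (Sum.inl i), by simp [hS]⟩
  let vb : S := ⟨Sum.inl (Sum.inr j), by simp [hS]⟩
  let vc : S := ⟨Sum.inr (Sum.inl i), by simp [hS]⟩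
  let vd : S := ⟨Sum.inr (Sum.inr j), by simp [hS]⟩
  let f : Fin 4 → S := ![va, vc, vd, vb]
  have hinv : ∀ v : S, v = va ∨ v = vb ∨ v = vc ∨ v = vd := by
    rintro ⟨v, hv⟩
    simp only [hS, Set.mem_insert_iff, Set.mem_singleton_iff] at hv
    rcases hv with rfl | rfl | rfl | rfl
    · exact Or.inl rfl
    · exact Or.inr (Or.inl rfl)
    · exact Or.inr (Or.inr (Or.inl rfl))
    · exact Or.inr (Or.inr (Or.inr rfl))
  have hfsurj : Function.Surjective f := by
    intro v
    rcases hinv v with rfl | rfl | rfl | rfl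
    · exact ⟨0, rfl⟩
    · exact ⟨3, rfl⟩
    · exact ⟨1, rfl⟩
    · exact ⟨2, rfl⟩
  have hfinj : Function.Injective f := by
    intro a b hab
    fin_cases a <;> fin_cases b <;> first | rfl | (exfalso; exact absurd (congrArg Subtype.val hab) (by simp [f, va, vb, vc, vd, Fin.isValue]))
  let g : Fin 4 ≃ S := Equiv.ofBijective f ⟨hfinj, hfsurj⟩
  refine ⟨(⟨g, ?_⟩ : cycleGraph 4 ≃g (Gxy n x y).induce S).symm⟩
  intro a b
  show ((Gxy n x y).induce S).Adj (f a) (f b) ↔ (cycleGraph 4).Adj a b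
  fin_cases a <;> fin_cases b <;>
    simp [f, va, vb, vc, vd, Gxy, comap_adj, hx, hy, cycleGraph_adj] <;> decide

/-- In `G_{x,y}`, the vertices `(a₁ⁱ, a₂ʲ, b₁ᵏ, b₂ˡ)` induce a 4-cycle only if
`i = k` and `j = l`; moreover `(a₁ⁱ, a₂ʲ, b₁ⁱ, b₂ʲ)` induces a 4-cycle iff
`x i j = y i j = 1`. -/
theorem stmt_7 (n : ℕ) (x y : Fin n → Fin n → Bool) :
    (∀ i j k l : Fin n,
      Nonempty ((Gxy n x y).induce
        ({Sum.inl (Sum.inl i), Sum.inl (Sum.inr j),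
          Sum.inr (Sum.inl k), Sum.inr (Sum.inr l)} : Set (LBVertex n)) ≃g cycleGraph 4) →
      i = k ∧ j = l) ∧
    (∀ i j : Fin n,
      Nonempty ((Gxy n x y).induce
        ({Sum.inl (Sum.inl i), Sum.inl (Sum.inr j),
          Sum.inr (Sum.inl i), Sum.inr (Sum.inr j)} : Set (LBVertex n)) ≃g cycleGraph 4) ↔
      (x i j = true ∧ y i j = true)) := by
  constructor
  · intro i j k l h
    obtain ⟨_, h1, h2, _⟩ := stmt7_key n x y i j k l h
    exact ⟨h1, h2⟩
  · intro i j
    constructor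
    · intro h
      obtain ⟨hx, _, _, hy⟩ := stmt7_key n x y i j i j h
      exact ⟨hx, hy⟩
    · rintro ⟨hx, hy⟩
      exact stmt7_key2 n x y i j hx hy
end
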